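/- arXiv:1203.6531 — 4 statements merged into one kernel-verified Lean document; each statement's English description precedes it below -/
import Mathlib

section
/- In the affine Weyl group Ã_n, for 2 ≤ j < n the identity r_0 (r_n r_{n−1} ⋯ r_j) r_{j+1} = r_j r_0 (r_n r_{n−1} ⋯ r_j) holds. -/
/-- The ascending product `r_a r_{a+1} ⋯ r_b` (the identity when `b < a`). -/
def ascProd {G : Type*} [Monoid G] (r : ℕ → G) (a b : ℕ) : G :=
  ((List.range' a (b + 1 - a)).map r).prod

/-- The descending product `r_a r_{a-1} ⋯ r_b` (the identity when `a < b`). -/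
def descProd {G : Type*} [Monoid G] (r : ℕ → G) (a b : ℕ) : G :=
  ((List.range' b (a + 1 - b)).reverse.map r).prod

lemma descProd_succ {G : Type*} [Monoid G] (r : ℕ → G) (m j : ℕ) (h : j ≤ m + 1) :
    descProd r (m + 1) j = r (m + 1) * descProd r m j := by
  unfold descProd
  have h1 : m + 1 + 1 - j = (m + 1 - j) + 1 := by omega
  have h2 : j + (m + 1 - j) = m + 1 := by omega
  rw [h1, List.range'_concat, List.reverse_append]
  simp [h2]

lemma descProd_self {G : Type*} [Monoid G] (r : ℕ → G) (j : ℕ) :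
    descProd r j j = r j := by
  unfold descProd
  simp

lemma core {G : Type*} [Group G] (n : ℕ) (r : ℕ → G)
    (h2 : ∀ i j, i + 1 < j → j ≤ n → ¬(i = 0 ∧ j = n) → r i * r j = r j * r i)
    (h3 : ∀ i < n, r i * r (i + 1) * r i = r (i + 1) * r i * r (i + 1))
    (j : ℕ) (hj : 2 ≤ j) (hjn : j < n) :
    ∀ m, j + 1 ≤ m → m ≤ n → descProd r m j * r (j + 1) = r j * descProd r m j := by
  intro m
  induction m with
  | zero => omega
  | succ m ih =>
    intro hm hmn
    rcases Nat.lt_or_ge (j + 1) (m + 1) with hlt | hge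
    · have hm' : j + 1 ≤ m := by omega
      rw [descProd_succ r m j (by omega), mul_assoc, ih hm' (by omega)]
      have hc : r j * r (m + 1) = r (m + 1) * r j := h2 j (m + 1) (by omega) hmn (by omega)
      rw [← mul_assoc, ← hc, mul_assoc]
    · have : m = j := by omega
      rw [this, descProd_succ r j j (by omega), descProd_self, mul_assoc]
      simpa [mul_assoc] using (h3 j hjn).symm

/-- In Ã_n, for 2 ≤ j < n: r_0 (r_n ⋯ r_j) r_{j+1} = r_j r_0 (r_n ⋯ r_j). -/
theorem affine_g4 (n : ℕ) (hn : 2 ≤ n) {G : Type*} [Group G] (r : ℕ → G)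
    (h1 : ∀ i ≤ n, r i * r i = 1)
    (h2 : ∀ i j, i + 1 < j → j ≤ n → ¬(i = 0 ∧ j = n) → r i * r j = r j * r i)
    (h3 : ∀ i < n, r i * r (i + 1) * r i = r (i + 1) * r i * r (i + 1))
    (h4 : r 0 * r n * r 0 = r n * r 0 * r n)
    (j : ℕ) (hj : 2 ≤ j) (hjn : j < n) :
    r 0 * descProd r n j * r (j + 1) = r j * (r 0 * descProd r n j) := by
  have hcore := core n r h2 h3 j hj hjn n (by omega) le_rfl
  have hc0 : r 0 * r j = r j * r 0 := h2 0 j (by omega) (by omega) (by omega)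
  rw [mul_assoc, hcore, ← mul_assoc, hc0, mul_assoc]
end

section
/- In the affine Weyl group Ã_n, for 1 ≤ l < n and 2 ≤ k ≤ n the identity r_0 (r_n ⋯ r_k)(r_1 ⋯ r_l)(r_0 r_1 ⋯ r_l) = r_n r_0 (r_n ⋯ r_k)(r_1 ⋯ r_l)(r_0 r_1 ⋯ r_{l−1}) holds. -/
private lemma ascProd_one_succ {G : Type*} [Monoid G] (r : ℕ → G) (l : ℕ) :
    ascProd r 1 (l + 1) = ascProd r 1 l * r (l + 1) := by
  unfold ascProd
  have h1 : l + 1 + 1 - 1 = l + 1 := by omega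
  have h2 : l + 1 - 1 = l := by omega
  rw [h1, h2, List.range'_concat]
  simp [Nat.add_comm]

private lemma descProd_split {G : Type*} [Monoid G] (r : ℕ → G) (n k : ℕ) (h : k ≤ n) (hn : 1 ≤ n) :
    descProd r n k = r n * descProd r (n - 1) k := by
  unfold descProd
  have h1 : n + 1 - k = (n - k) + 1 := by omega
  have h2 : n - 1 + 1 - k = n - k := by omega
  have h3 : k + 1 * (n - k) = n := by rw [Nat.one_mul]; omega
  rw [h1, h2, List.range'_concat, h3, List.reverse_append]
  simp

/-- `g` commutes with `ascProd r 1 b` if it commutes with each `r i`, `1 ≤ i ≤ b`. -/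
private lemma comm_ascProd {G : Type*} [Monoid G] (r : ℕ → G) (g : G) (b : ℕ)
    (h : ∀ i, 1 ≤ i → i ≤ b → g * r i = r i * g) :
    g * ascProd r 1 b = ascProd r 1 b * g := by
  refine Commute.list_prod_right _ _ ?_
  intro x hx
  simp only [List.mem_map] at hx
  obtain ⟨i, hi, rfl⟩ := hx
  rw [List.mem_range'_1] at hi
  exact h i hi.1 (by omega)

/-- `r 0` commutes with `descProd r (n-1) k` when `2 ≤ k`. -/
private lemma comm_descProd {G : Type*} [Group G] (n : ℕ) (r : ℕ → G)
    (h2 : ∀ i j, i + 1 < j → j ≤ n → ¬(i = 0 ∧ j = n) → r i * r j = r j * r i)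
    (k : ℕ) (hk2 : 2 ≤ k) :
    r 0 * descProd r (n - 1) k = descProd r (n - 1) k * r 0 := by
  refine Commute.list_prod_right _ _ ?_
  intro x hx
  simp only [List.mem_map, List.mem_reverse] at hx
  obtain ⟨i, hi, rfl⟩ := hx
  rw [List.mem_range'_1] at hi
  exact h2 0 i (by omega) (by omega) (by omega)

/-- Key conjugation: `r 0 * D * r 0 = r n * (r 0 * D)` where `D = descProd r n k`. -/
private lemma desc_conj {G : Type*} [Group G] (n : ℕ) (r : ℕ → G)
    (h2 : ∀ i j, i + 1 < j → j ≤ n → ¬(i = 0 ∧ j = n) → r i * r j = r j * r i)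
    (h4 : r 0 * r n * r 0 = r n * r 0 * r n)
    (k : ℕ) (hk2 : 2 ≤ k) (hkn : k ≤ n) :
    r 0 * descProd r n k * r 0 = r n * (r 0 * descProd r n k) := by
  have hs := descProd_split r n k hkn (by omega)
  have hc := comm_descProd n r h2 k hk2
  calc r 0 * descProd r n k * r 0
      = r 0 * r n * (descProd r (n - 1) k * r 0) := by rw [hs]; group
    _ = r 0 * r n * (r 0 * descProd r (n - 1) k) := by rw [hc]
    _ = (r 0 * r n * r 0) * descProd r (n - 1) k := by group
    _ = (r n * r 0 * r n) * descProd r (n - 1) k := by rw [h4]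
    _ = r n * (r 0 * (r n * descProd r (n - 1) k)) := by group
    _ = r n * (r 0 * descProd r n k) := by rw [← hs]

/-- In Ã_n, for 1 ≤ l < n and 2 ≤ k ≤ n: r_0 (r_n ⋯ r_k)(r_1 ⋯ r_l)(r_0 r_1 ⋯ r_l) = r_n r_0 (r_n ⋯ r_k)(r_1 ⋯ r_l)(r_0 r_1 ⋯ r_{l−1}). -/
theorem affine_g6 (n : ℕ) (hn : 2 ≤ n) {G : Type*} [Group G] (r : ℕ → G)
    (h1 : ∀ i ≤ n, r i * r i = 1)
    (h2 : ∀ i j, i + 1 < j → j ≤ n → ¬(i = 0 ∧ j = n) → r i * r j = r j * r i)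
    (h3 : ∀ i < n, r i * r (i + 1) * r i = r (i + 1) * r i * r (i + 1))
    (h4 : r 0 * r n * r 0 = r n * r 0 * r n)
    (k l : ℕ) (hl1 : 1 ≤ l) (hln : l < n) (hk2 : 2 ≤ k) (hkn : k ≤ n) :
    r 0 * descProd r n k * ascProd r 1 l * (r 0 * ascProd r 1 l) =
      r n * (r 0 * descProd r n k * ascProd r 1 l * (r 0 * ascProd r 1 (l - 1))) := by
  set D := descProd r n k with hD
  revert hln
  induction l, hl1 using Nat.le_induction with
  | base =>
    intro hln
    have a1 : ascProd r 1 1 = r 1 := by simp [ascProd]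
    have a0 : ascProd r 1 0 = 1 := by simp [ascProd]
    rw [show (1:ℕ) - 1 = 0 from rfl, a1, a0]
    have braid : r 1 * r 0 * r 1 = r 0 * r 1 * r 0 := (h3 0 (by omega)).symm
    have hDc := desc_conj n r h2 h4 k hk2 hkn
    calc r 0 * D * r 1 * (r 0 * r 1)
        = r 0 * D * (r 1 * r 0 * r 1) := by group
      _ = r 0 * D * (r 0 * r 1 * r 0) := by rw [braid]
      _ = (r 0 * D * r 0) * (r 1 * (r 0 * 1)) := by group
      _ = (r n * (r 0 * D)) * (r 1 * (r 0 * 1)) := by rw [hDc]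
      _ = r n * (r 0 * D * r 1 * (r 0 * 1)) := by group
  | succ l hl ih =>
    intro hln
    have hsub : l + 1 - 1 = l := by omega
    rw [hsub]
    have ih' := ih (by omega)
    have hAl : ascProd r 1 l = ascProd r 1 (l - 1) * r l := by
      obtain ⟨m, rfl⟩ := Nat.exists_eq_add_of_le hl
      have : 1 + m - 1 = m := by omega
      rw [this, Nat.add_comm 1 m, ascProd_one_succ]
    have hAl1 : ascProd r 1 (l + 1) = ascProd r 1 l * r (l + 1) := ascProd_one_succ r l
    set a := ascProd r 1 (l - 1) with ha
    set A := ascProd r 1 l with hA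
    -- r (l+1) commutes with r 0
    have c1 : r (l + 1) * r 0 = r 0 * r (l + 1) :=
      (h2 0 (l + 1) (by omega) (by omega) (by omega)).symm
    -- r (l+1) commutes with a = ascProd r 1 (l-1)
    have c2 : r (l + 1) * a = a * r (l + 1) := by
      rw [ha]
      exact comm_ascProd r (r (l + 1)) (l - 1) fun i hi1 hib =>
        (h2 i (l + 1) (by omega) (by omega) (by omega)).symm
    have braid : r (l + 1) * r l * r (l + 1) = r l * r (l + 1) * r l := (h3 l (by omega)).symm
    rw [hAl1]
    calc r 0 * D * (A * r (l + 1)) * (r 0 * (A * r (l + 1)))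
        = r 0 * D * A * ((r (l + 1) * r 0) * (a * (r l * r (l + 1)))) := by rw [hAl]; group
      _ = r 0 * D * A * ((r 0 * r (l + 1)) * (a * (r l * r (l + 1)))) := by rw [c1]
      _ = r 0 * D * A * (r 0 * ((r (l + 1) * a) * (r l * r (l + 1)))) := by group
      _ = r 0 * D * A * (r 0 * ((a * r (l + 1)) * (r l * r (l + 1)))) := by rw [c2]
      _ = r 0 * D * A * (r 0 * (a * (r (l + 1) * r l * r (l + 1)))) := by group
      _ = r 0 * D * A * (r 0 * (a * (r l * r (l + 1) * r l))) := by rw [braid]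
      _ = (r 0 * D * A * (r 0 * A)) * (r (l + 1) * r l) := by rw [hAl]; group
      _ = (r n * (r 0 * D * A * (r 0 * a))) * (r (l + 1) * r l) := by rw [ih']
      _ = r n * (r 0 * D * A * (r 0 * ((a * r (l + 1)) * r l))) := by group
      _ = r n * (r 0 * D * A * (r 0 * ((r (l + 1) * a) * r l))) := by rw [c2]
      _ = r n * (r 0 * D * A * ((r 0 * r (l + 1)) * (a * r l))) := by group
      _ = r n * (r 0 * D * A * ((r (l + 1) * r 0) * (a * r l))) := by rw [← c1]
      _ = r n * (r 0 * D * (A * r (l + 1)) * (r 0 * (a * r l))) := by group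
      _ = r n * (r 0 * D * (A * r (l + 1)) * (r 0 * A)) := by rw [← hAl]
end

section
/- In the affine Weyl group Ã_n, for 3 ≤ k ≤ n the identity r_0 (r_n ⋯ r_k)(r_1 ⋯ r_l) r_0 (r_n ⋯ r_{k−1}) = r_1 r_0 (r_n ⋯ r_k)(r_1 ⋯ r_l) r_0 (r_n ⋯ r_k) holds for all k−1 ≤ l ≤ n. -/
section Aux

variable {G : Type*} [Group G] (r : ℕ → G)

lemma mul_rot2 {a b c d : G} (h : a * b = c * d) (x : G) :
    a * (b * x) = c * (d * x) := by rw [← mul_assoc, h, mul_assoc]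

lemma mul_rot3 {a b c d e f : G} (h : a * (b * c) = d * (e * f)) (x : G) :
    a * (b * (c * x)) = d * (e * (f * x)) := by
  have := congrArg (· * x) h
  simpa [mul_assoc] using this

lemma desc_pop_top {a b : ℕ} (h : b ≤ a + 1) :
    descProd r (a + 1) b = r (a + 1) * descProd r a b := by
  unfold descProd
  have h1 : a + 1 + 1 - b = (a + 1 - b) + 1 := by omega
  rw [h1, List.range'_1_concat, List.reverse_append, List.reverse_singleton]
  have h2 : b + (a + 1 - b) = a + 1 := by omega
  simp [h2]

lemma desc_pop_bot {a b : ℕ} (h : b ≤ a) :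
    descProd r a b = descProd r a (b + 1) * r b := by
  unfold descProd
  have h1 : a + 1 - b = (a - b) + 1 := by omega
  have h2 : a + 1 - (b + 1) = a - b := by omega
  rw [h1, h2, List.range'_succ]
  simp [mul_comm]

lemma asc_pop_bot {a b : ℕ} (h : a ≤ b) :
    ascProd r a b = r a * ascProd r (a + 1) b := by
  unfold ascProd
  have h1 : b + 1 - a = (b - a) + 1 := by omega
  have h2 : b + 1 - (a + 1) = b - a := by omega
  rw [h1, h2, List.range'_succ]
  simp

lemma asc_pop_top {a b : ℕ} (h : a ≤ b + 1) :
    ascProd r a (b + 1) = ascProd r a b * r (b + 1) := by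
  unfold ascProd
  have h1 : b + 1 + 1 - a = (b + 1 - a) + 1 := by omega
  rw [h1, List.range'_1_concat]
  have h2 : a + (b + 1 - a) = b + 1 := by omega
  simp [h2]

lemma descProd_empty {a b : ℕ} (h : a < b) : descProd r a b = 1 := by
  unfold descProd
  have : a + 1 - b = 0 := by omega
  simp [this]

lemma ascProd_empty {a b : ℕ} (h : b < a) : ascProd r a b = 1 := by
  unfold ascProd
  have : b + 1 - a = 0 := by omega
  simp [this]

lemma commute_descProd {g : G} {a b : ℕ}
    (h : ∀ i, b ≤ i → i ≤ a → g * r i = r i * g) :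
    g * descProd r a b = descProd r a b * g := by
  refine (Commute.list_prod_right _ _ fun x hx => ?_)
  simp only [List.mem_map, List.mem_reverse, List.mem_range'_1] at hx
  obtain ⟨i, ⟨hbi, hia⟩, rfl⟩ := hx
  exact h i hbi (by omega)

lemma commute_ascProd {g : G} {a b : ℕ}
    (h : ∀ i, a ≤ i → i ≤ b → g * r i = r i * g) :
    g * ascProd r a b = ascProd r a b * g := by
  refine (Commute.list_prod_right _ _ fun x hx => ?_)
  simp only [List.mem_map, List.mem_range'_1] at hx
  obtain ⟨i, ⟨hai, hib⟩, rfl⟩ := hx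
  exact h i hai (by omega)

variable (n : ℕ)
variable (h2 : ∀ i j, i + 1 < j → j ≤ n → ¬(i = 0 ∧ j = n) → r i * r j = r j * r i)
variable (h3 : ∀ i < n, r i * r (i + 1) * r i = r (i + 1) * r i * r (i + 1))

include h2 h3 in
/-- The shift property: `r_i · (r_a ⋯ r_b) = (r_a ⋯ r_b) · r_{i+1}` for `b ≤ i < a`. -/
lemma shiftD {b i : ℕ} (hb : 1 ≤ b) :
    ∀ a, b ≤ i → i < a → a ≤ n →
      r i * descProd r a b = descProd r a b * r (i + 1) := by
  intro a
  induction a with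
  | zero => omega
  | succ a ih =>
    intro hbi hia han
    rw [desc_pop_top r (by omega)]
    rcases Nat.lt_or_ge i a with hlt | hge
    · -- i + 1 < a + 1 : commute past r (a+1), use ih
      have hc : r i * r (a + 1) = r (a + 1) * r i :=
        h2 i (a + 1) (by omega) han (by omega)
      rw [← mul_assoc, hc, mul_assoc, ih hbi hlt (by omega), ← mul_assoc]
    · -- i = a
      obtain rfl : i = a := by omega
      obtain ⟨j, rfl⟩ : ∃ j, i = j + 1 := ⟨i - 1, by omega⟩
      rw [desc_pop_top r (show b ≤ j + 1 by omega)]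
      have hbr : r (j+1) * r (j+2) * r (j+1) = r (j+2) * r (j+1) * r (j+2) :=
        h3 (j+1) (by omega)
      have hcm : r (j+2) * descProd r j b = descProd r j b * r (j+2) :=
        commute_descProd r fun m hm1 hm2 =>
          (h2 m (j+2) (by omega) (by omega) (by omega)).symm
      simp only [← mul_assoc]
      rw [show j + 1 + 1 = j + 2 from rfl, hbr,
        mul_assoc (r (j+2) * r (j+1)) (r (j+2)) _, hcm, ← mul_assoc]

include h2 h3 in
/-- `(r_c ⋯ r_b)(r_a ⋯ r_b) = (r_a ⋯ r_b)(r_{c+1} ⋯ r_{b+1})` for `c < a`. -/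
lemma prodShift {a b : ℕ} (hb : 1 ≤ b) (han : a ≤ n) :
    ∀ c, c < a → descProd r c b * descProd r a b
      = descProd r a b * descProd r (c + 1) (b + 1) := by
  intro c
  induction c with
  | zero =>
    intro _
    rw [descProd_empty r (show 0 < b by omega),
      descProd_empty r (show 0 + 1 < b + 1 by omega), one_mul, mul_one]
  | succ c ih =>
    intro hca
    by_cases hbc : b ≤ c + 1
    · rw [desc_pop_top r hbc, mul_assoc, ih (by omega), ← mul_assoc,
        shiftD r n h2 h3 hb a hbc hca han, mul_assoc,
        ← desc_pop_top r (show b + 1 ≤ c + 1 + 1 by omega)]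
    · rw [descProd_empty r (show c + 1 < b by omega),
        descProd_empty r (show c + 1 + 1 < b + 1 by omega), one_mul, mul_one]

end Aux

section Base

variable {G : Type*} [Group G] (r : ℕ → G) (n : ℕ)
variable (h2 : ∀ i j, i + 1 < j → j ≤ n → ¬(i = 0 ∧ j = n) → r i * r j = r j * r i)
variable (h3 : ∀ i < n, r i * r (i + 1) * r i = r (i + 1) * r i * r (i + 1))
variable (h4 : r 0 * r n * r 0 = r n * r 0 * r n)

include h2 h3 h4 in
lemma affine_g8_base (k : ℕ) (hk3 : 3 ≤ k) (hkn : k ≤ n) :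
    r 0 * descProd r n k * ascProd r 1 (k - 1) * r 0 * descProd r n (k - 1) =
      r 1 * (r 0 * descProd r n k * ascProd r 1 (k - 1) * r 0 * descProd r n k) := by
  obtain ⟨j, rfl⟩ : ∃ j, k = j + 3 := ⟨k - 3, by omega⟩
  obtain ⟨m, rfl⟩ : ∃ m, n = m + 1 := ⟨n - 1, by omega⟩
  have ek : j + 3 - 1 = j + 2 := by omega
  rw [ek]
  set D := descProd r (m + 1) (j + 3) with hD
  set D' := descProd r (m + 1) (j + 2) with hD'
  set Ah := ascProd r 2 (j + 2) with hAh
  set A2 := ascProd r 2 (j + 1) with hA2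
  have hjm : j + 2 ≤ m := by omega
  -- basic facts
  have f1 : ascProd r 1 (j + 2) = r 1 * Ah := asc_pop_bot r (by omega)
  have f2 : r 0 * Ah = Ah * r 0 :=
    commute_ascProd r fun i hi1 hi2 => h2 0 i (by omega) (by omega) (by omega)
  have f2' : r 0 * A2 = A2 * r 0 :=
    commute_ascProd r fun i hi1 hi2 => h2 0 i (by omega) (by omega) (by omega)
  have f3 : r 1 * D = D * r 1 :=
    commute_descProd r fun i hi1 hi2 => h2 1 i (by omega) (by omega) (by omega)
  have f4 : r 0 * r 1 * r 0 = r 1 * r 0 * r 1 := h3 0 (by omega)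
  have fd' : D' = D * r (j + 2) := desc_pop_bot r (by omega)
  have fDA2 : D * A2 = A2 * D := by
    refine (commute_descProd r fun i hi1 hi2 => ?_).symm
    exact (commute_ascProd r fun p hp1 hp2 =>
      (h2 p i (by omega) (by omega) (by omega)).symm).symm
  have f5 : D * Ah = A2 * D' := by
    rw [hAh, asc_pop_top r (show 2 ≤ j + 1 + 1 by omega), ← hA2, ← mul_assoc,
      fDA2, mul_assoc, ← fd']
  -- the two key r_n facts
  set E := descProd r m (j + 2) with hE
  have hDE : D' = r (m + 1) * E := desc_pop_top r (by omega)
  have h0E : r 0 * E = E * r 0 :=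
    commute_descProd r fun i hi1 hi2 => h2 0 i (by omega) (by omega) (by omega)
  have h4' : ∀ x : G, r 0 * (r (m + 1) * (r 0 * x))
      = r (m + 1) * (r 0 * (r (m + 1) * x)) :=
    mul_rot3 (by simpa [mul_assoc] using h4)
  have hED : E * D' = D' * D := by
    have h := prodShift r (m + 1) h2 h3 (a := m + 1) (b := j + 2)
      (by omega) le_rfl m (by omega)
    rw [show j + 2 + 1 = j + 3 by omega] at h
    exact h
  have f8 : D' * (r 0 * D') = r (m + 1) * (r 0 * (D' * D)) := by
    nth_rewrite 1 [hDE]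
    rw [mul_assoc, ← mul_assoc E (r 0) D', ← h0E, mul_assoc (r 0) E D', hED]
  have f9 : r 0 * (D' * (r 0 * D)) = r (m + 1) * (r 0 * (D' * D)) := by
    conv_lhs => rw [hDE]
    rw [mul_assoc (r (m + 1)) E, ← mul_assoc E (r 0) D, ← h0E,
      mul_assoc (r 0) E D, h4' (E * D), ← mul_assoc (r (m + 1)) E D, ← hDE]
  -- assemble
  simp only [mul_assoc]
  rw [f1]
  simp only [mul_assoc]
  simp only [mul_rot2 f3.symm]
  have e4 : ∀ x : G, r 1 * (r 0 * (r 1 * x)) = r 0 * (r 1 * (r 0 * x)) :=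
    mul_rot3 (by simpa [mul_assoc] using f4.symm)
  rw [e4]
  congr 1
  congr 1
  -- goal: D * (Ah * (r 0 * D')) = r 0 * (D * (Ah * (r 0 * D)))
  simp only [mul_rot2 f5]
  simp only [mul_rot2 f2']
  rw [f8, f9]

end Base

/-- In Ã_n, for 3 ≤ k ≤ n and k−1 ≤ l ≤ n: r_0 (r_n ⋯ r_k)(r_1 ⋯ r_l) r_0 (r_n ⋯ r_{k−1}) = r_1 r_0 (r_n ⋯ r_k)(r_1 ⋯ r_l) r_0 (r_n ⋯ r_k). -/
theorem affine_g8 (n : ℕ) (hn : 2 ≤ n) {G : Type*} [Group G] (r : ℕ → G)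
    (h1 : ∀ i ≤ n, r i * r i = 1)
    (h2 : ∀ i j, i + 1 < j → j ≤ n → ¬(i = 0 ∧ j = n) → r i * r j = r j * r i)
    (h3 : ∀ i < n, r i * r (i + 1) * r i = r (i + 1) * r i * r (i + 1))
    (h4 : r 0 * r n * r 0 = r n * r 0 * r n)
    (k l : ℕ) (hk3 : 3 ≤ k) (hkn : k ≤ n) (hkl : k - 1 ≤ l) (hln : l ≤ n) :
    r 0 * descProd r n k * ascProd r 1 l * r 0 * descProd r n (k - 1) =
      r 1 * (r 0 * descProd r n k * ascProd r 1 l * r 0 * descProd r n k) := by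
  revert hln
  induction l, hkl using Nat.le_induction with
  | base => intro _; exact affine_g8_base r n h2 h3 h4 k hk3 hkn
  | succ l hl ih =>
    intro hln1
    specialize ih (by omega)
    rw [asc_pop_top r (show (1:ℕ) ≤ l + 1 by omega)]
    by_cases hcase : l + 1 < n
    · have s1 : r (l + 1) * (r 0 * descProd r n (k - 1)) =
          r 0 * (descProd r n (k - 1) * r (l + 1 + 1)) := by
        rw [← mul_assoc, ← h2 0 (l + 1) (by omega) (by omega) (by omega), mul_assoc,
          shiftD r n h2 h3 (show 1 ≤ k - 1 by omega) n (by omega) (by omega) le_rfl]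
      have s2 : r (l + 1) * (r 0 * descProd r n k) =
          r 0 * (descProd r n k * r (l + 1 + 1)) := by
        rw [← mul_assoc, ← h2 0 (l + 1) (by omega) (by omega) (by omega), mul_assoc,
          shiftD r n h2 h3 (show 1 ≤ k by omega) n (by omega) (by omega) le_rfl]
      simp only [mul_assoc] at ih ⊢
      rw [s1, s2]
      simpa only [mul_assoc] using congrArg (· * r (l + 1 + 1)) ih
    · have hln : l + 1 = n := by omega
      obtain ⟨m, rfl⟩ : ∃ m, n = m + 1 := ⟨n - 1, by omega⟩
      have s1 : r (l + 1) * (r 0 * descProd r (m + 1) (k - 1)) =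
          r 0 * (descProd r (m + 1) (k - 1) * r 0) := by
        have hDE : descProd r (m + 1) (k - 1) = r (m + 1) * descProd r m (k - 1) :=
          desc_pop_top r (by omega)
        have h0E : r 0 * descProd r m (k - 1) = descProd r m (k - 1) * r 0 :=
          commute_descProd r fun i hi1 hi2 => h2 0 i (by omega) (by omega) (by omega)
        rw [hln, hDE, ← mul_assoc, ← mul_assoc, ← h4]
        simp only [mul_assoc]
        rw [h0E]
      have s2 : r (l + 1) * (r 0 * descProd r (m + 1) k) =
          r 0 * (descProd r (m + 1) k * r 0) := by
        have hDE : descProd r (m + 1) k = r (m + 1) * descProd r m k :=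
          desc_pop_top r (by omega)
        have h0E : r 0 * descProd r m k = descProd r m k * r 0 :=
          commute_descProd r fun i hi1 hi2 => h2 0 i (by omega) (by omega) (by omega)
        rw [hln, hDE, ← mul_assoc, ← mul_assoc, ← h4]
        simp only [mul_assoc]
        rw [h0E]
      simp only [mul_assoc] at ih ⊢
      rw [s1, s2]
      simpa only [mul_assoc] using congrArg (· * r 0) ih
end

section
/- The shifted-sum ⊕ of a sequence of connected basic partitions a_1,…,a_m, where a_i = (k_i, 1,…,1 (l_i ones), 0,…,0) with k_1 > k_2 > ⋯ > k_m and l_1 > l_2 > ⋯ > l_m, equals the n-tuple (k_1, k_2+1, …, k_m+m−1, m,…,m (l_m times), m−1,…,m−1 (l_{m−1}−l_m−1 times), …, 1,…,1 (l_1−l_2−1 times), 0,…,0), where ⊕_{i=1}^m a_i = Σ_{i=1}^m σ^{i−1}(a_i) and σ denotes the cyclic right shift σ(p_1,…,p_n) = (p_n, p_1,…,p_{n−1}) applied coordinatewise. -/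
/-- The cyclic right shift `σ(p_1,…,p_n) = (p_n, p_1, …, p_{n−1})` on `n`-tuples. -/
def cshift {n : ℕ} (p : Fin n → ℤ) : Fin n → ℤ :=
  fun t => p ⟨((t : ℕ) + (n - 1)) % n, Nat.mod_lt _ t.pos⟩

/-- The basic partition `(k, 1, …, 1, 0, …, 0)` with `l` ones, as an `n`-tuple. -/
def basicPartition (n : ℕ) (k l : ℕ) : Fin n → ℤ :=
  fun t => if (t : ℕ) = 0 then (k : ℤ) else if (t : ℕ) ≤ l then 1 else 0

lemma cshift_iterate {n : ℕ} (p : Fin n → ℤ) (i : ℕ) (t : Fin n) :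
    cshift^[i] p t = p ⟨((t : ℕ) + i * (n - 1)) % n, Nat.mod_lt _ t.pos⟩ := by
  induction i generalizing t with
  | zero => simp [Nat.mod_eq_of_lt t.isLt]
  | succ i ih =>
    rw [Function.iterate_succ_apply', cshift, ih]
    congr 1
    apply Fin.ext
    simp only [Nat.mod_add_mod]
    congr 1
    ring

lemma shift_basic_eval {n : ℕ} (ki li i : ℕ) (hi : i < n) (hli : li + i < n) (t : Fin n) :
    cshift^[i] (basicPartition n ki li) t =
      if (t : ℕ) = i then (ki : ℤ) else if i < (t : ℕ) ∧ (t : ℕ) ≤ i + li then 1 else 0 := by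
  rw [cshift_iterate]
  have ht := t.isLt
  rcases le_or_gt i (t : ℕ) with h | h
  · have h1 : i * (n - 1) + i * 1 = i * n := by rw [← Nat.mul_add]; congr 1; omega
    have h2 : (t : ℕ) + i * (n - 1) = ((t : ℕ) - i) + i * n := by omega
    have hidx : ((t : ℕ) + i * (n - 1)) % n = (t : ℕ) - i := by
      rw [h2, Nat.add_mul_mod_self_right, Nat.mod_eq_of_lt (by omega)]
    simp only [basicPartition, hidx]
    split_ifs <;> omega
  · have h1 : i * (n - 1) + i * 1 = i * n := by rw [← Nat.mul_add]; congr 1; omega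
    have h1' : (i - 1) * n + 1 * n = i * n := by rw [← Nat.add_mul]; congr 1; omega
    have h2 : (t : ℕ) + i * (n - 1) = (n + (t : ℕ) - i) + (i - 1) * n := by omega
    have hidx : ((t : ℕ) + i * (n - 1)) % n = n + (t : ℕ) - i := by
      rw [h2, Nat.add_mul_mod_self_right, Nat.mod_eq_of_lt (by omega)]
    simp only [basicPartition, hidx]
    split_ifs <;> omega

lemma chain_le (l : ℕ → ℕ) (m : ℕ) (hc : ∀ i j, i < j → j < m → l j < l i) :
    ∀ d i, i + d < m → l (i + d) + d ≤ l i := by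
  intro d
  induction d with
  | zero => intro i _; simp
  | succ d ih =>
    intro i hi
    have h1 := ih (i + 1) (by omega)
    have h2 := hc i (i + 1) (by omega) (by omega)
    rw [show i + 1 + d = i + (d + 1) from by omega] at h1
    omega

lemma flat_getD (G : ℕ → ℕ) (hG : ∀ i j, i ≤ j → G j ≤ G i) :
    ∀ a q, (((List.range a).reverse.flatMap fun j =>
        List.replicate (G j - G (j + 1)) ((j : ℤ) + 1)).getD q 0)
      = ((Finset.range a).filter (fun i => q + G a + 1 ≤ G i)).card := by
  intro a
  induction a with
  | zero => intro q; simp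
  | succ a ih =>
    intro q
    rw [List.range_succ, List.reverse_append]
    simp only [List.reverse_singleton, List.singleton_append, List.flatMap_cons]
    rcases lt_or_ge q (G a - G (a + 1)) with h | h
    · rw [List.getD_append _ _ _ _ (by simpa using h)]
      have hlen : q < (List.replicate (G a - G (a + 1)) ((a : ℤ) + 1)).length := by simpa using h
      rw [List.getD_eq_getElem _ _ hlen, List.getElem_replicate]
      have hGa : G (a + 1) ≤ G a := hG a (a + 1) (by omega)
      rw [Finset.filter_true_of_mem]
      · simp [Finset.card_range]
      · intro i hi
        simp only [Finset.mem_range] at hi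
        have := hG i a (by omega)
        omega
    · rw [List.getD_append_right _ _ _ _ (by simpa using h)]
      simp only [List.length_replicate]
      have hGa : G (a + 1) ≤ G a := hG a (a + 1) (by omega)
      rw [ih, show q - (G a - G (a + 1)) + G a + 1 = q + G (a + 1) + 1 from by omega,
        Finset.range_add_one, Finset.filter_insert, if_neg (by omega)]


/-- The shifted-sum `⊕_{i=1}^m a_i = Σ_{i=1}^m σ^{i−1}(a_i)` of a sequence of connected
basic partitions `a_i = (k_i, 1^{l_i}, 0, …)` with `k_1 > ⋯ > k_m`, `l_1 > ⋯ > l_m`, equals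
the `n`-tuple `(k_1, k_2+1, …, k_m+m−1, m^{l_m}, (m−1)^{l_{m−1}−l_m−1}, …, 1^{l_1−l_2−1}, 0, …)`
(here the `getD`-list on the right is that concatenation, padded by zeros). -/
theorem shifted_sum_of_connected_basic_partitions (n m : ℕ) (hm : 1 ≤ m)
    (k l : ℕ → ℕ)
    (hk : ∀ i < m, 1 ≤ k i ∧ k i ≤ n)
    (hl : ∀ i < m, 1 ≤ l i ∧ l i ≤ n - 1)
    (hconn : ∀ i j, i < j → j < m → k j < k i ∧ l j < l i) :
    ∀ t : Fin n,
      (∑ i ∈ Finset.range m, cshift^[i] (basicPartition n (k i) (l i))) t =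
        ((List.ofFn (fun i : Fin m => (k i + i : ℤ))) ++
          ((List.range m).reverse.flatMap fun j =>
            List.replicate (if j = m - 1 then l j else l j - l (j + 1) - 1)
              ((j : ℤ) + 1))).getD t 0 := by
  intro t
  have hn : 0 < n := t.pos
  have ht := t.isLt
  have hchain := chain_le l m (fun i j hij hj => (hconn i j hij hj).2)
  have hl0 : l 0 ≤ n - 1 := (hl 0 (by omega)).2
  have hLi : ∀ i < m, m - i ≤ l i := by
    intro i hi
    have h1 := hchain (m - 1 - i) i (by omega)
    have h2 := (hl (m - 1) (by omega)).1
    rw [show i + (m - 1 - i) = m - 1 from by omega] at h1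
    omega
  have hLn : ∀ i < m, l i + i ≤ n - 1 := by
    intro i hi
    have := hchain i 0 (by omega)
    rw [Nat.zero_add] at this
    omega
  have hmn : m < n := by have := hLi 0 (by omega); omega
  set G : ℕ → ℕ := fun i => if i < m then l i + i else m - 1 with hGdef
  have hG : ∀ i j, i ≤ j → G j ≤ G i := by
    intro i j hij
    simp only [hGdef]
    rcases lt_or_ge j m with hj | hj
    · have hi : i < m := lt_of_le_of_lt hij hj
      rw [if_pos hj, if_pos hi]
      have := hchain (j - i) i (by omega)
      rw [show i + (j - i) = j from by omega] at this
      omega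
    · rw [if_neg (by omega)]
      rcases lt_or_ge i m with hi | hi
      · rw [if_pos hi]; have := hLi i hi; omega
      · rw [if_neg (by omega)]
  -- rewrite the flatMap lengths
  have hflat : ((List.range m).reverse.flatMap fun j =>
      List.replicate (if j = m - 1 then l j else l j - l (j + 1) - 1) ((j : ℤ) + 1))
      = ((List.range m).reverse.flatMap fun j =>
        List.replicate (G j - G (j + 1)) ((j : ℤ) + 1)) := by
    rw [List.flatMap_def, List.flatMap_def]
    congr 1
    apply List.map_congr_left
    intro j hj
    rw [List.mem_reverse, List.mem_range] at hj
    congr 1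
    by_cases hjm : j = m - 1
    · rw [if_pos hjm]
      simp only [hGdef]
      rw [if_pos hj, if_neg (by omega)]
      omega
    · rw [if_neg hjm]
      have := (hconn j (j + 1) (by omega) (by omega)).2
      simp only [hGdef]
      rw [if_pos hj, if_pos (by omega)]
      omega
  rw [hflat]
  -- evaluate LHS pointwise
  have hLHS : (∑ i ∈ Finset.range m, cshift^[i] (basicPartition n (k i) (l i))) t
      = ∑ i ∈ Finset.range m, (if (t : ℕ) = i then (k i : ℤ)
          else if i < (t : ℕ) ∧ (t : ℕ) ≤ i + l i then 1 else 0) := by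
    rw [Finset.sum_apply]
    apply Finset.sum_congr rfl
    intro i hi
    rw [Finset.mem_range] at hi
    exact shift_basic_eval (k i) (l i) i (by omega) (by have := hLn i hi; omega) t
  rw [hLHS]
  rcases lt_or_ge (t : ℕ) m with htm | htm
  · -- head part
    rw [List.getD_append _ _ _ _ (by simpa using htm)]
    have hlen : (t : ℕ) < (List.ofFn (fun i : Fin m => (k i + i : ℤ))).length := by
      simpa using htm
    rw [List.getD_eq_getElem _ _ hlen, List.getElem_ofFn]
    have hstep : ∑ i ∈ Finset.range m, (if (t : ℕ) = i then (k i : ℤ)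
          else if i < (t : ℕ) ∧ (t : ℕ) ≤ i + l i then 1 else 0)
        = ∑ i ∈ Finset.range m, ((if i = (t : ℕ) then (k (t : ℕ) : ℤ) else 0)
            + (if i < (t : ℕ) then (1 : ℤ) else 0)) := by
      apply Finset.sum_congr rfl
      intro i hi
      rw [Finset.mem_range] at hi
      rcases eq_or_ne (t : ℕ) i with h | h
      · subst h
        simp
      · rw [if_neg h, if_neg (Ne.symm h)]
        by_cases h2 : i < (t : ℕ)
        · have := hLi i hi
          rw [if_pos ⟨h2, by omega⟩, if_pos h2]
          norm_num
        · rw [if_neg (fun hc => h2 hc.1), if_neg h2]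
          norm_num
    rw [hstep, Finset.sum_add_distrib, Finset.sum_ite_eq' (Finset.range m) ((t : ℕ))
      (fun _ => (k (t : ℕ) : ℤ)), if_pos (Finset.mem_range.mpr htm), Finset.sum_boole]
    have hfil : (Finset.range m).filter (fun i => i < (t : ℕ)) = Finset.range (t : ℕ) := by
      ext x
      simp only [Finset.mem_filter, Finset.mem_range]
      omega
    rw [hfil, Finset.card_range]
  · -- tail part
    rw [List.getD_append_right _ _ _ _ (by simpa using htm)]
    simp only [List.length_ofFn]
    rw [flat_getD G hG m]
    have hfil : (Finset.range m).filter (fun i => (t : ℕ) - m + G m + 1 ≤ G i)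
        = (Finset.range m).filter (fun i => (t : ℕ) ≤ i + l i) := by
      apply Finset.filter_congr
      intro x hx
      rw [Finset.mem_range] at hx
      simp only [hGdef]
      rw [if_pos hx, if_neg (by omega)]
      constructor <;> intro <;> omega
    rw [hfil]
    have hstep : ∑ i ∈ Finset.range m, (if (t : ℕ) = i then (k i : ℤ)
          else if i < (t : ℕ) ∧ (t : ℕ) ≤ i + l i then 1 else 0)
        = ∑ i ∈ Finset.range m, (if (t : ℕ) ≤ i + l i then (1 : ℤ) else 0) := by
      apply Finset.sum_congr rfl
      intro i hi
      rw [Finset.mem_range] at hi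
      rw [if_neg (by omega)]
      by_cases h2 : (t : ℕ) ≤ i + l i
      · rw [if_pos ⟨by omega, h2⟩, if_pos h2]
      · rw [if_neg (fun hc => h2 hc.2), if_neg h2]
    rw [hstep, Finset.sum_boole]
end
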